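/- Set S = D(I_I − P^D_ℛ) and V = P^D_{𝒯^{⊥_D}} Z. Then EᵀSE and VᵀDV are invertible and Bᵀ P^D_ℋ D⁻¹ B = (EᵀSE)⁻¹ + BᵀV(VᵀDV)⁻¹VᵀB; i.e. the γγ-block of the asymptotic covariance matrix Σ_λ̂ has this representation. -/

import Mathlib

open Matrix BigOperators

noncomputable section

/-- Cells `(j,k)` of a `(J+1) × (K+1)` contingency table. -/
abbrev Cell (J K : ℕ) := Fin (J + 1) × Fin (K + 1)

/-- Standard unit vector `e_{jk}` in `ℝ^I`. -/
def eV {J K : ℕ} (c : Cell J K) : Cell J K → ℝ := Pi.single c 1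

/-- Row-sum vector `e_{j+} = Σ_k e_{jk}`. -/
def eRow {J K : ℕ} (j : Fin (J + 1)) : Cell J K → ℝ := ∑ k : Fin (K + 1), eV (j, k)

/-- Column-sum vector `e_{+k} = Σ_j e_{jk}`. -/
def eCol {J K : ℕ} (k : Fin (K + 1)) : Cell J K → ℝ := ∑ j : Fin (J + 1), eV (j, k)

/-- The all-ones vector `e_{++}`. -/
def eAll (J K : ℕ) : Cell J K → ℝ := ∑ j : Fin (J + 1), ∑ k : Fin (K + 1), eV (j, k)

/-- The row space `ℛ = span{e_{0+},…,e_{J+}}`. -/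
def rowSpace (J K : ℕ) : Submodule ℝ (Cell J K → ℝ) :=
  Submodule.span ℝ (Set.range (eRow (J := J) (K := K)))

/-- The column space `𝒞 = span{e_{+0},…,e_{+K}}`. -/
def colSpace (J K : ℕ) : Submodule ℝ (Cell J K → ℝ) :=
  Submodule.span ℝ (Set.range (eCol (J := J) (K := K)))

/-- The diagonal space `𝒟 = span{e_{++}}`. -/
def diagSpace (J K : ℕ) : Submodule ℝ (Cell J K → ℝ) :=
  Submodule.span ℝ {eAll J K}

/-- The marginal space `𝒯 = ℛ + 𝒞`. -/
def margSpace (J K : ℕ) : Submodule ℝ (Cell J K → ℝ) := rowSpace J K ⊔ colSpace J K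

/-- `P` is the `D`-orthogonal projection matrix onto the subspace `S`:
`P x ∈ S` and `x - P x` is `D`-orthogonal to `S`, for every `x`. -/
def IsProjD {J K : ℕ} (D : Matrix (Cell J K) (Cell J K) ℝ) (S : Submodule ℝ (Cell J K → ℝ))
    (P : Matrix (Cell J K) (Cell J K) ℝ) : Prop :=
  ∀ x, P.mulVec x ∈ S ∧ ∀ s ∈ S, (x - P.mulVec x) ⬝ᵥ D.mulVec s = 0

/-- The `D`-orthogonal complement of a subspace `S`. -/
def perpD {J K : ℕ} (D : Matrix (Cell J K) (Cell J K) ℝ) (S : Submodule ℝ (Cell J K → ℝ)) :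
    Submodule ℝ (Cell J K → ℝ) where
  carrier := {x | ∀ t ∈ S, x ⬝ᵥ D.mulVec t = 0}
  add_mem' := by
    intro a b ha hb t ht
    simp only [Set.mem_setOf_eq] at *
    simp [add_dotProduct, ha t ht, hb t ht]
  zero_mem' := by
    intro t ht
    simp
  smul_mem' := by
    intro c a ha t ht
    simp only [Set.mem_setOf_eq] at *
    simp [smul_dotProduct, ha t ht]

/-- The vector `c_{jk} = e_{jk} + e_{00} - e_{j0} - e_{0k}` (for `1 ≤ j`, `1 ≤ k`). -/
def cVec {J K : ℕ} (j : Fin J) (k : Fin K) : Cell J K → ℝ :=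
  eV (j.succ, k.succ) + eV (0, 0) - eV (j.succ, 0) - eV (0, k.succ)

/-- The `I × (JK)` matrix `C` with columns `c_{jk}`. -/
def Cmat (J K : ℕ) : Matrix (Cell J K) (Fin J × Fin K) ℝ :=
  fun i jk => cVec jk.1 jk.2 i

/-- The vector `b_k = e_{0k} - e_{00}` (for `1 ≤ k`). -/
def bVec {J K : ℕ} (k : Fin K) : Cell J K → ℝ :=
  eV ((0 : Fin (J + 1)), k.succ) - eV (0, 0)

/-- The `I × K` matrix `B` with columns `b_k`. -/
def Bmat (J K : ℕ) : Matrix (Cell J K) (Fin K) ℝ :=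
  fun i k => bVec k i

/-- The `I × K` matrix `E` with columns `e_{+1},…,e_{+K}`. -/
def Emat (J K : ℕ) : Matrix (Cell J K) (Fin K) ℝ :=
  fun i k => eCol k.succ i

/-- Column space of a matrix. -/
def colSpan {m n : Type*} [Fintype n] (A : Matrix m n ℝ) : Submodule ℝ (m → ℝ) :=
  Submodule.span ℝ (Set.range fun j => fun i => A i j)

/-- The reduced `(JK) × L` covariate matrix `Z°` with rows `z_{jk}ᵀ`, `j,k ≥ 1`. -/
def Zred {J K : ℕ} {L : Type*} (Z : Matrix (Cell J K) L ℝ) : Matrix (Fin J × Fin K) L ℝ :=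
  fun jk => Z (jk.1.succ, jk.2.succ)

/-- The model space `ℋ = 𝒯 + col(Z)` of the log-linear model
`η_{jk} = α + ρ_j + γ_k + z_{jk}ᵀ θ`. -/
def modelSpace {J K : ℕ} {L : Type*} [Fintype L] (Z : Matrix (Cell J K) L ℝ) :
    Submodule ℝ (Cell J K → ℝ) :=
  margSpace J K ⊔ colSpan Z

end

/-
With `W = (1 - P_ℛ) E`, the marginal space splits `D`-orthogonally as `𝒯 = ℛ ⊕ col W`, and since
`V = (1 - P_𝒯) Z` the model space splits as `ℋ = 𝒯 ⊕ col V`. Adjoining orthogonal columns adds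
their projections, so `P_ℋ = P_ℛ + W (WᵀDW)⁻¹ WᵀD + V (VᵀDV)⁻¹ VᵀD`. Now `Bᵀ` annihilates `ℛ`,
`BᵀW = BᵀE = I`, `WᵀDW = EᵀSE`, and the factor `D⁻¹` cancels the trailing `D` of each projection.
The Gram matrices are invertible: `W` has the left inverse `Bᵀ`, and `Vc = 0` forces `Zc ∈ 𝒯`, i.e.
`(Zc)_{jk} = a_j + b_k`, which vanishes because `Zc` vanishes on row `0` and column `0`; then
`Z°c = 0` and `c = 0` by the rank of `Z°`.
-/

section ColSpan

variable {m n : Type*} [Fintype n] {A : Matrix m n ℝ}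

theorem colSpan_eq_range_mulVecLin (A : Matrix m n ℝ) :
    colSpan A = LinearMap.range A.mulVecLin :=
  (Matrix.range_mulVecLin A).symm

theorem mem_colSpan_iff {y : m → ℝ} : y ∈ colSpan A ↔ ∃ c, A *ᵥ c = y := by
  rw [colSpan_eq_range_mulVecLin]; rfl

theorem mulVec_mem_colSpan (A : Matrix m n ℝ) (c : n → ℝ) : A *ᵥ c ∈ colSpan A :=
  mem_colSpan_iff.2 ⟨c, rfl⟩

theorem col_mem_colSpan (A : Matrix m n ℝ) (j : n) : (fun i => A i j) ∈ colSpan A :=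
  Submodule.subset_span ⟨j, rfl⟩

theorem sup_colSpan_one_sub_mul [Fintype m] [DecidableEq m] {P : Matrix m m ℝ}
    {S : Submodule ℝ (m → ℝ)} (hP : colSpan P ≤ S) :
    S ⊔ colSpan ((1 - P) * A) = S ⊔ colSpan A := by
  have hPA : ∀ c, P *ᵥ (A *ᵥ c) ∈ S := fun c => hP (mulVec_mem_colSpan P _)
  have key : ∀ c, ((1 - P) * A) *ᵥ c = A *ᵥ c - P *ᵥ (A *ᵥ c) := fun c => by
    rw [← mulVec_mulVec, sub_mulVec, one_mulVec]
  refine le_antisymm (sup_le le_sup_left fun y hy => ?_) (sup_le le_sup_left fun y hy => ?_)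
  · obtain ⟨c, rfl⟩ := mem_colSpan_iff.1 hy
    rw [key]
    exact Submodule.sub_mem _ (Submodule.mem_sup_right (mulVec_mem_colSpan A c))
      (Submodule.mem_sup_left (hPA c))
  · obtain ⟨c, rfl⟩ := mem_colSpan_iff.1 hy
    rw [← sub_add_cancel (A *ᵥ c) (P *ᵥ (A *ᵥ c)), ← key]
    exact Submodule.add_mem _ (Submodule.mem_sup_right (mulVec_mem_colSpan _ c))
      (Submodule.mem_sup_left (hPA c))

end ColSpan

/-- The `D`-orthogonal projection onto `colSpan A` when `AᵀDA` is invertible. -/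
noncomputable def projMat {m n : Type*} [Fintype m] [Fintype n] [DecidableEq n]
    (D : Matrix m m ℝ) (A : Matrix m n ℝ) : Matrix m m ℝ :=
  A * (Aᵀ * D * A)⁻¹ * Aᵀ * D

theorem isUnit_transpose_mul_mul_of_posDef {m n : Type*} [Fintype m] [Fintype n] [DecidableEq n]
    {D : Matrix m m ℝ} (hD : D.PosDef) {A : Matrix m n ℝ} (hA : Function.Injective A.mulVec) :
    IsUnit (Aᵀ * D * A) := by
  simpa using (hD.conjTranspose_mul_mul_same hA).isUnit

theorem projMat_mul_inv {m n : Type*} [Fintype m] [DecidableEq m] [Fintype n] [DecidableEq n]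
    {D : Matrix m m ℝ} (hD : IsUnit D) (A : Matrix m n ℝ) :
    projMat D A * D⁻¹ = A * (Aᵀ * D * A)⁻¹ * Aᵀ := by
  rw [projMat, Matrix.mul_assoc, Matrix.mul_nonsing_inv _ ((Matrix.isUnit_iff_isUnit_det D).1 hD),
    Matrix.mul_one]

section PerpD

variable {J K : ℕ} {D : Matrix (Cell J K) (Cell J K) ℝ} {S T : Submodule ℝ (Cell J K → ℝ)}

theorem dotProduct_mulVec_comm (hD : D.IsSymm) (x y : Cell J K → ℝ) :
    x ⬝ᵥ D *ᵥ y = y ⬝ᵥ D *ᵥ x := by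
  rw [dotProduct_mulVec, ← mulVec_transpose, hD.eq, dotProduct_comm]

theorem eq_zero_of_dotProduct_mulVec_self (hD : D.PosDef) {x : Cell J K → ℝ}
    (h : x ⬝ᵥ D *ᵥ x = 0) : x = 0 := by
  by_contra hx
  have := hD.dotProduct_mulVec_pos hx
  rw [star_trivial, h] at this
  exact lt_irrefl 0 this

theorem le_perpD_comm (hD : D.IsSymm) : S ≤ perpD D T ↔ T ≤ perpD D S :=
  ⟨fun h t ht s hs => by rw [dotProduct_mulVec_comm hD]; exact h hs t ht,
    fun h s hs t ht => by rw [dotProduct_mulVec_comm hD]; exact h ht s hs⟩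

theorem perpD_anti (h : S ≤ T) : perpD D T ≤ perpD D S :=
  fun _ hx s hs => hx s (h hs)

theorem perpD_sup : perpD D (S ⊔ T) = perpD D S ⊓ perpD D T := by
  ext x
  refine ⟨fun h => ⟨fun s hs => h s (Submodule.mem_sup_left hs),
    fun t ht => h t (Submodule.mem_sup_right ht)⟩, ?_⟩
  rintro ⟨hS, hT⟩ _ hst
  obtain ⟨s, hs, t, ht, rfl⟩ := Submodule.mem_sup.1 hst
  rw [mulVec_add, dotProduct_add, hS s hs, hT t ht, add_zero]

theorem mem_perpD_colSpan_iff (hD : D.IsSymm) {n : Type*} [Fintype n]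
    {A : Matrix (Cell J K) n ℝ} {x : Cell J K → ℝ} :
    x ∈ perpD D (colSpan A) ↔ Aᵀ *ᵥ (D *ᵥ x) = 0 := by
  rw [← dotProduct_eq_zero_iff]
  refine ⟨fun h c => ?_, fun h _ hy => ?_⟩
  · rw [dotProduct_comm, dotProduct_mulVec, vecMul_transpose, ← dotProduct_mulVec_comm hD]
    exact h _ (mulVec_mem_colSpan A c)
  · obtain ⟨c, rfl⟩ := mem_colSpan_iff.1 hy
    rw [dotProduct_mulVec_comm hD, ← vecMul_transpose, ← dotProduct_mulVec, dotProduct_comm]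
    exact h c

end PerpD

namespace IsProjD

variable {J K : ℕ} {D P Q : Matrix (Cell J K) (Cell J K) ℝ} {S : Submodule ℝ (Cell J K → ℝ)}

theorem colSpan_le (hP : IsProjD D S P) : colSpan P ≤ S := fun _ hy => by
  obtain ⟨c, rfl⟩ := mem_colSpan_iff.1 hy
  exact (hP c).1

theorem sub_mulVec_mem_perpD (hP : IsProjD D S P) (x : Cell J K → ℝ) :
    x - P *ᵥ x ∈ perpD D S :=
  (hP x).2

theorem unique (hD : D.PosDef) (hP : IsProjD D S P) (hQ : IsProjD D S Q) : P = Q := by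
  refine Matrix.ext_iff_mulVec.2 fun x => sub_eq_zero.1 (eq_zero_of_dotProduct_mulVec_self hD ?_)
  have hu : P *ᵥ x - Q *ᵥ x ∈ S := S.sub_mem (hP x).1 (hQ x).1
  have key : P *ᵥ x - Q *ᵥ x = (x - Q *ᵥ x) - (x - P *ᵥ x) := by abel
  conv_lhs => arg 1; rw [key]
  rw [sub_dotProduct, hP.sub_mulVec_mem_perpD x _ hu, hQ.sub_mulVec_mem_perpD x _ hu, sub_zero]

theorem one_sub (hD : D.IsSymm) (hP : IsProjD D S P) : IsProjD D (perpD D S) (1 - P) := by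
  intro x
  refine ⟨by rw [sub_mulVec, one_mulVec]; exact hP.sub_mulVec_mem_perpD x, fun s hs => ?_⟩
  rw [sub_mulVec, one_mulVec, sub_sub_cancel, dotProduct_mulVec_comm hD]
  exact hs _ (hP x).1

theorem transpose_mul_mul_one_sub (hD : D.IsSymm) (hP : IsProjD D S P) :
    Pᵀ * D * (1 - P) = 0 := by
  refine Matrix.ext_iff_mulVec.2 fun x => ?_
  rw [zero_mulVec, ← mulVec_mulVec, ← mulVec_mulVec, ← mem_perpD_colSpan_iff hD]
  refine perpD_anti hP.colSpan_le ?_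
  rw [sub_mulVec, one_mulVec]
  exact hP.sub_mulVec_mem_perpD x

theorem transpose_mul_mul_one_sub_mul (hD : D.IsSymm) (hP : IsProjD D S P) {n : Type*}
    (A : Matrix (Cell J K) n ℝ) :
    ((1 - P) * A)ᵀ * D * ((1 - P) * A) = Aᵀ * (D * (1 - P)) * A := by
  have h : (1 - P)ᵀ * D * (1 - P) = D * (1 - P) := by
    rw [transpose_sub, transpose_one, Matrix.sub_mul, Matrix.sub_mul,
      hP.transpose_mul_mul_one_sub hD, Matrix.one_mul, sub_zero]
  rw [transpose_mul, ← h]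
  simp only [Matrix.mul_assoc]

variable {n : Type*} [Fintype n] {A : Matrix (Cell J K) n ℝ}

theorem colSpan_one_sub_mul_le_perpD (hP : IsProjD D S P) : colSpan ((1 - P) * A) ≤ perpD D S :=
  fun _ hy => by
    obtain ⟨c, rfl⟩ := mem_colSpan_iff.1 hy
    rw [← mulVec_mulVec, sub_mulVec, one_mulVec]
    exact hP.sub_mulVec_mem_perpD _

theorem sup_colSpan [DecidableEq n] (hD : D.IsSymm) (hP : IsProjD D S P)
    (hA : colSpan A ≤ perpD D S) (hG : IsUnit (Aᵀ * D * A)) :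
    IsProjD D (S ⊔ colSpan A) (P + projMat D A) := by
  intro x
  have hQx :
      (P + projMat D A) *ᵥ x = P *ᵥ x + A *ᵥ ((Aᵀ * D * A)⁻¹ *ᵥ (Aᵀ *ᵥ (D *ᵥ x))) := by
    simp only [projMat, add_mulVec, mulVec_mulVec, Matrix.mul_assoc]
  refine ⟨?_, ?_⟩
  · rw [hQx]
    exact Submodule.add_mem_sup (hP x).1 (mulVec_mem_colSpan A _)
  · show _ ∈ perpD D _
    rw [perpD_sup, Submodule.mem_inf, hQx, ← sub_sub]
    refine ⟨Submodule.sub_mem _ (hP.sub_mulVec_mem_perpD x) (hA (mulVec_mem_colSpan A _)), ?_⟩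
    have hPx : Aᵀ *ᵥ (D *ᵥ (P *ᵥ x)) = 0 :=
      (mem_perpD_colSpan_iff hD).1 ((le_perpD_comm hD).1 hA (hP x).1)
    have hG' : ∀ v, Aᵀ *ᵥ (D *ᵥ (A *ᵥ ((Aᵀ * D * A)⁻¹ *ᵥ v))) = v := fun v => by
      rw [mulVec_mulVec, mulVec_mulVec, mulVec_mulVec,
        Matrix.mul_nonsing_inv _ ((Matrix.isUnit_iff_isUnit_det _).1 hG), one_mulVec]
    rw [mem_perpD_colSpan_iff hD, mulVec_sub, mulVec_sub, mulVec_sub, mulVec_sub, hPx, hG',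
      sub_zero, sub_self]

theorem add_projMat_one_sub_mul [DecidableEq n] (hD : D.PosDef) (hP : IsProjD D S P)
    (hA : Function.Injective ((1 - P) * A).mulVec) :
    IsProjD D (S ⊔ colSpan A) (P + projMat D ((1 - P) * A)) := by
  rw [← sup_colSpan_one_sub_mul hP.colSpan_le]
  exact hP.sup_colSpan (isHermitian_iff_isSymm.1 hD.1) hP.colSpan_one_sub_mul_le_perpD
    (isUnit_transpose_mul_mul_of_posDef hD hA)

end IsProjD

theorem mulVec_injective_of_rank_eq_card {m n : Type*} [Fintype n] {A : Matrix m n ℝ}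
    (h : A.rank = Fintype.card n) : Function.Injective A.mulVec := by
  rw [Matrix.mulVec_injective_iff, linearIndependent_iff_card_eq_finrank_span]
  exact h.symm.trans A.rank_eq_finrank_span_cols

section Table

variable {J K : ℕ}

theorem eRow_apply (j' j : Fin (J + 1)) (k : Fin (K + 1)) :
    eRow (K := K) j' (j, k) = if j = j' then 1 else 0 := by
  by_cases h : j = j' <;> simp [eRow, eV, Finset.sum_apply, Pi.single_apply, h]

theorem eCol_apply (k' k : Fin (K + 1)) (j : Fin (J + 1)) :
    eCol (J := J) k' (j, k) = if k = k' then 1 else 0 := by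
  by_cases h : k = k' <;> simp [eCol, eV, Finset.sum_apply, Pi.single_apply, h]

theorem exists_of_mem_rowSpace {x : Cell J K → ℝ} (hx : x ∈ rowSpace J K) :
    ∃ a : Fin (J + 1) → ℝ, ∀ j k, x (j, k) = a j := by
  obtain ⟨a, rfl⟩ := (Submodule.mem_span_range_iff_exists_fun ℝ).1 hx
  exact ⟨a, fun j k => by simp [Finset.sum_apply, eRow_apply]⟩

theorem exists_of_mem_colSpace {x : Cell J K → ℝ} (hx : x ∈ colSpace J K) :
    ∃ b : Fin (K + 1) → ℝ, ∀ j k, x (j, k) = b k := by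
  obtain ⟨b, rfl⟩ := (Submodule.mem_span_range_iff_exists_fun ℝ).1 hx
  exact ⟨b, fun j k => by simp [Finset.sum_apply, eCol_apply]⟩

theorem eq_zero_of_mem_margSpace {x : Cell J K → ℝ} (hx : x ∈ margSpace J K)
    (hrow : ∀ j, x (j, 0) = 0) (hcol : ∀ k, x (0, k) = 0) : x = 0 := by
  obtain ⟨r, hr, c, hc, rfl⟩ := Submodule.mem_sup.1 hx
  obtain ⟨a, ha⟩ := exists_of_mem_rowSpace hr
  obtain ⟨b, hb⟩ := exists_of_mem_colSpace hc
  have hx : ∀ j k, (r + c) (j, k) = a j + b k := fun j k => by rw [Pi.add_apply, ha, hb]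
  funext ⟨j, k⟩
  have h1 := hrow j
  have h2 := hcol k
  have h3 := hrow 0
  rw [hx] at h1 h2 h3 ⊢
  simp only [Pi.zero_apply]
  linarith

theorem eAll_eq_sum_eCol : eAll J K = ∑ k, eCol k :=
  Finset.sum_comm

theorem margSpace_eq_sup_colSpan_Emat :
    margSpace J K = rowSpace J K ⊔ colSpan (Emat J K) := by
  have hE : colSpan (Emat J K) ≤ colSpace J K :=
    Submodule.span_le.2 (Set.range_subset_iff.2 fun k => Submodule.subset_span ⟨k.succ, rfl⟩)
  refine le_antisymm (sup_le le_sup_left ?_) (sup_le_sup_left hE _)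
  refine Submodule.span_le.2 (Set.range_subset_iff.2 fun k => ?_)
  cases k using Fin.cases with
  | zero =>
    have h0 : eCol 0 = eAll J K - ∑ k : Fin K, eCol k.succ := by
      rw [eAll_eq_sum_eCol, Fin.sum_univ_succ, add_sub_cancel_right]
    rw [SetLike.mem_coe, h0]
    exact Submodule.sub_mem _
      (Submodule.mem_sup_left (Submodule.sum_mem _ fun j _ => Submodule.subset_span ⟨j, rfl⟩))
      (Submodule.mem_sup_right (Submodule.sum_mem _ fun k _ => col_mem_colSpan (Emat J K) k))
  | succ k => exact Submodule.mem_sup_right (col_mem_colSpan (Emat J K) k)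

theorem transpose_Bmat_mul_apply {n : Type*} (Y : Matrix (Cell J K) n ℝ) (k : Fin K) (l : n) :
    ((Bmat J K)ᵀ * Y) k l = Y (0, k.succ) l - Y (0, 0) l := by
  simp [Matrix.mul_apply, Bmat, bVec, eV, Pi.single_apply, sub_mul, Finset.sum_sub_distrib]

theorem transpose_Bmat_mul_eq_zero {n : Type*} [Fintype n] {Y : Matrix (Cell J K) n ℝ}
    (hY : colSpan Y ≤ rowSpace J K) : (Bmat J K)ᵀ * Y = 0 := by
  ext k l
  obtain ⟨a, ha⟩ := exists_of_mem_rowSpace (hY (col_mem_colSpan Y l))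
  rw [transpose_Bmat_mul_apply, ha, ha, sub_self, Matrix.zero_apply]

theorem transpose_Bmat_mul_Emat : (Bmat J K)ᵀ * Emat J K = 1 := by
  ext k l
  rw [transpose_Bmat_mul_apply]
  simp [Emat, eCol_apply, Matrix.one_apply, (Fin.succ_ne_zero _).symm]

theorem injective_one_sub_mul_mulVec {D P : Matrix (Cell J K) (Cell J K) ℝ}
    (hP : IsProjD D (margSpace J K) P) {ι : Type*} [Fintype ι] {Z : Matrix (Cell J K) ι ℝ}
    (hZrow : ∀ j, Z (j, 0) = 0) (hZcol : ∀ k, Z (0, k) = 0)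
    (hZrank : (Zred Z).rank = Fintype.card ι) :
    Function.Injective ((1 - P) * Z).mulVec := by
  refine (injective_iff_map_eq_zero ((1 - P) * Z).mulVecLin).2 fun c hc => ?_
  rw [Matrix.mulVecLin_apply, ← mulVec_mulVec, sub_mulVec, one_mulVec, sub_eq_zero] at hc
  have hZc : Z *ᵥ c = 0 := eq_zero_of_mem_margSpace (hc ▸ (hP _).1)
    (fun j => by simp [mulVec, hZrow]) (fun k => by simp [mulVec, hZcol])
  refine mulVec_injective_of_rank_eq_card hZrank ?_
  rw [mulVec_zero]
  exact funext fun jk => congrFun hZc (jk.1.succ, jk.2.succ)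

end Table

theorem gamma_gamma_block_representation_general
    {J K L : ℕ}
    (μ : Cell J K → ℝ) (hμ : ∀ i, 0 < μ i)
    (Z : Matrix (Cell J K) (Fin L) ℝ)
    (hZrow : ∀ j, Z (j, 0) = 0) (hZcol : ∀ k, Z (0, k) = 0)
    (hZrank : (Zred Z).rank = L)
    (PH : Matrix (Cell J K) (Cell J K) ℝ)
    (hPH : IsProjD (Matrix.diagonal μ) (modelSpace Z) PH)
    (PR : Matrix (Cell J K) (Cell J K) ℝ)
    (hPR : IsProjD (Matrix.diagonal μ) (rowSpace J K) PR)
    (PTperp : Matrix (Cell J K) (Cell J K) ℝ)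
    (hPTperp : IsProjD (Matrix.diagonal μ) (perpD (Matrix.diagonal μ) (margSpace J K)) PTperp)
    (S : Matrix (Cell J K) (Cell J K) ℝ)
    (hS : S = Matrix.diagonal μ * (1 - PR))
    (V : Matrix (Cell J K) (Fin L) ℝ) (hV : V = PTperp * Z) :
    IsUnit ((Emat J K)ᵀ * S * Emat J K) ∧
    IsUnit (Vᵀ * Matrix.diagonal μ * V) ∧
    (Bmat J K)ᵀ * PH * (Matrix.diagonal μ)⁻¹ * Bmat J K =
      ((Emat J K)ᵀ * S * Emat J K)⁻¹ +
        (Bmat J K)ᵀ * V * (Vᵀ * Matrix.diagonal μ * V)⁻¹ * Vᵀ * Bmat J K := by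
  set D := Matrix.diagonal μ
  have hD : D.PosDef := Matrix.PosDef.diagonal hμ
  set W := (1 - PR) * Emat J K
  have hBW : (Bmat J K)ᵀ * W = 1 := by
    rw [← Matrix.mul_assoc, Matrix.mul_sub, Matrix.mul_one,
      transpose_Bmat_mul_eq_zero hPR.colSpan_le, sub_zero, transpose_Bmat_mul_Emat]
  have hWB : Wᵀ * Bmat J K = 1 := by simpa using congrArg transpose hBW
  have hW : Function.Injective W.mulVec := fun c c' h => by
    simpa [mulVec_mulVec, hBW] using congrArg ((Bmat J K)ᵀ *ᵥ ·) h
  set PT := PR + projMat D W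
  have hPT : IsProjD D (margSpace J K) PT :=
    margSpace_eq_sup_colSpan_Emat ▸ hPR.add_projMat_one_sub_mul hD hW
  have hVZ : V = (1 - PT) * Z := by
    rw [hV, hPTperp.unique hD (hPT.one_sub (Matrix.isSymm_diagonal μ))]
  have hVinj : Function.Injective V.mulVec :=
    hVZ ▸ injective_one_sub_mul_mulVec hPT hZrow hZcol (by rwa [Fintype.card_fin])
  have hPHV : PH = PT + projMat D V :=
    hPH.unique hD (hVZ ▸ hPT.add_projMat_one_sub_mul hD (hVZ ▸ hVinj))
  have hESE : (Emat J K)ᵀ * S * Emat J K = Wᵀ * D * W := by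
    rw [hS, hPR.transpose_mul_mul_one_sub_mul (Matrix.isSymm_diagonal μ)]
  refine ⟨hESE ▸ isUnit_transpose_mul_mul_of_posDef hD hW,
    isUnit_transpose_mul_mul_of_posDef hD hVinj, ?_⟩
  rw [hPHV, hESE, Matrix.mul_add, Matrix.mul_add, Matrix.add_mul, Matrix.add_mul, Matrix.add_mul,
    Matrix.add_mul, transpose_Bmat_mul_eq_zero hPR.colSpan_le, Matrix.zero_mul, Matrix.zero_mul,
    zero_add, Matrix.mul_assoc _ (projMat D W), projMat_mul_inv hD.isUnit,
    Matrix.mul_assoc _ (projMat D V), projMat_mul_inv hD.isUnit]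
  simp only [← Matrix.mul_assoc, hBW, Matrix.one_mul]
  rw [Matrix.mul_assoc _ Wᵀ, hWB, Matrix.mul_one]

/-- with `S = D(I − P^D_ℛ)` and `V = P^D_{𝒯^{⊥_D}} Z`, the matrices
`EᵀSE` and `VᵀDV` are invertible and the `γγ`-block of the asymptotic covariance
matrix `Σ_λ̂` satisfies `Bᵀ P^D_ℋ D⁻¹ B = (EᵀSE)⁻¹ + BᵀV(VᵀDV)⁻¹VᵀB`. -/
theorem gamma_gamma_block_representation
    {J K L : ℕ} (hJ : 1 ≤ J) (hK : 1 ≤ K) (hL : 1 ≤ L)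
    (μ : Cell J K → ℝ) (hμ : ∀ i, 0 < μ i)
    (Z : Matrix (Cell J K) (Fin L) ℝ)
    (hZrow : ∀ j, Z (j, 0) = 0) (hZcol : ∀ k, Z (0, k) = 0)
    (hZrank : (Zred Z).rank = L)
    (PH : Matrix (Cell J K) (Cell J K) ℝ)
    (hPH : IsProjD (Matrix.diagonal μ) (modelSpace Z) PH)
    (PR : Matrix (Cell J K) (Cell J K) ℝ)
    (hPR : IsProjD (Matrix.diagonal μ) (rowSpace J K) PR)
    (PTperp : Matrix (Cell J K) (Cell J K) ℝ)
    (hPTperp : IsProjD (Matrix.diagonal μ) (perpD (Matrix.diagonal μ) (margSpace J K)) PTperp)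
    (S : Matrix (Cell J K) (Cell J K) ℝ)
    (hS : S = Matrix.diagonal μ * (1 - PR))
    (V : Matrix (Cell J K) (Fin L) ℝ) (hV : V = PTperp * Z) :
    IsUnit ((Emat J K)ᵀ * S * Emat J K) ∧
    IsUnit (Vᵀ * Matrix.diagonal μ * V) ∧
    (Bmat J K)ᵀ * PH * (Matrix.diagonal μ)⁻¹ * Bmat J K =
      ((Emat J K)ᵀ * S * Emat J K)⁻¹ +
        (Bmat J K)ᵀ * V * (Vᵀ * Matrix.diagonal μ * V)⁻¹ * Vᵀ * Bmat J K :=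
  gamma_gamma_block_representation_general μ hμ Z hZrow hZcol hZrank PH hPH PR hPR PTperp hPTperp S
    hS V hV
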